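/- arXiv:2011.09405 — 4 statements merged into one kernel-verified Lean document; each statement's English description precedes it below -/
import Mathlib

section
/- Let τ ∈ F with Im τ ≥ 3. Then |j(τ)| ≥ 10⁸, 0.98·|j(τ)|² ≤ |j(2τ)| ≤ 1.02·|j(τ)|², and 0.83·|j(τ)|^{1/2} ≤ |j(τ/2)| ≤ 1.17·|j(τ)|^{1/2} and 0.83·|j(τ)|^{1/2} ≤ |j((τ+1)/2)| ≤ 1.17·|j(τ)|^{1/2}. -/
open Complex Real Filter

/-- The normalized Eisenstein series `E₄`, via its `q`-expansion
`E₄(τ) = 1 + 240 ∑_{n≥1} σ₃(n) qⁿ`, `q = exp(2πiτ)`. -/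
noncomputable def E4 (τ : ℂ) : ℂ :=
  1 + 240 * ∑' n : ℕ, (∑ d ∈ (n + 1).divisors, (d : ℂ) ^ 3) *
    Complex.exp (2 * Real.pi * Complex.I * τ) ^ (n + 1)

/-- The normalized Eisenstein series `E₆`, via its `q`-expansion
`E₆(τ) = 1 - 504 ∑_{n≥1} σ₅(n) qⁿ`, `q = exp(2πiτ)`. -/
noncomputable def E6 (τ : ℂ) : ℂ :=
  1 - 504 * ∑' n : ℕ, (∑ d ∈ (n + 1).divisors, (d : ℂ) ^ 5) *
    Complex.exp (2 * Real.pi * Complex.I * τ) ^ (n + 1)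

/-- The Klein `j`-invariant, `j = 1728 E₄³ / (E₄³ - E₆²)`. -/
noncomputable def klj (τ : ℂ) : ℂ := 1728 * E4 τ ^ 3 / (E4 τ ^ 3 - E6 τ ^ 2)

/-- The usual fundamental domain `F` of the modular group:
`{z : -1/2 < Re z ≤ 1/2, |z| > 1} ∪ {z : |z| = 1, Re z ≥ 0}` (inside the upper half-plane). -/
def Fdom : Set ℂ :=
  {z | 0 < z.im ∧ ((-1/2 < z.re ∧ z.re ≤ 1/2 ∧ 1 < ‖z‖) ∨
    (‖z‖ = 1 ∧ 0 ≤ z.re))}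

/-- The level-2 modular polynomial `Φ₂(X,Y)`. -/
def Phi2 (X Y : ℂ) : ℂ :=
  X ^ 3 + Y ^ 3 - X ^ 2 * Y ^ 2 + 1488 * X ^ 2 * Y + 1488 * X * Y ^ 2
    - 162000 * X ^ 2 - 162000 * Y ^ 2 + 40773375 * X * Y
    + 8748000000 * X + 8748000000 * Y - 157464000000000

/-!
Put `q(σ) = exp(2πiσ)`. For `Im σ ≥ 3/2` one has `|q| ≤ e^{-3π} < 1/11500`, and the bound
`σ_k(n) ≤ 100^{n-1}` (`k ≤ 5`) on the coefficients gives `E₄ = 1 + 240(q + O(q²))` and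
`E₆ = 1 - 504(q + O(q²))` with explicit constants. Hence `E₄³ - E₆² = 1728 q + O(q²)`, and
`|j(σ) q(σ) - 1| ≤ 1250 |q(σ)|`. At `σ = τ, 2τ, τ/2, (τ+1)/2` the values `|q(σ)|` are
`e², e⁴, e, e` with `e = e^{-π Im τ}`, and the claimed estimates become real inequalities.
-/

lemma nat_add_one_pow_six_le_hundred_pow (n : ℕ) : ((n : ℝ) + 1) ^ 6 ≤ 100 ^ n := by
  induction n with
  | zero => norm_num
  | succ n ih =>
    push_cast
    calc ((n : ℝ) + 1 + 1) ^ 6 ≤ (2 * ((n : ℝ) + 1)) ^ 6 := by gcongr; linarith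
      _ = 64 * ((n : ℝ) + 1) ^ 6 := by ring
      _ ≤ 100 ^ (n + 1) := by
        rw [pow_succ 100]; linarith [pow_nonneg (by norm_num : (0 : ℝ) ≤ 100) n]

lemma sum_divisors_pow_le (m k : ℕ) : ∑ d ∈ m.divisors, d ^ k ≤ m ^ (k + 1) :=
  calc ∑ d ∈ m.divisors, d ^ k ≤ m.divisors.card • m ^ k :=
        Finset.sum_le_card_nsmul _ _ _ fun d hd => Nat.pow_le_pow_left (Nat.divisor_le hd) k
    _ ≤ m * m ^ k := by rw [smul_eq_mul]; gcongr; exact Nat.card_divisors_le_self m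
    _ = m ^ (k + 1) := by ring

lemma norm_sum_divisors_pow_le_hundred_pow {k : ℕ} (hk : k ≤ 5) (n : ℕ) :
    ‖∑ d ∈ (n + 1).divisors, (d : ℂ) ^ k‖ ≤ 100 ^ n := by
  have hsum : ‖∑ d ∈ (n + 1).divisors, (d : ℂ) ^ k‖
      = ((∑ d ∈ (n + 1).divisors, d ^ k : ℕ) : ℝ) := by
    rw [← Complex.norm_natCast]; push_cast; rfl
  calc ‖∑ d ∈ (n + 1).divisors, (d : ℂ) ^ k‖ ≤ ((n : ℝ) + 1) ^ (k + 1) := by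
        rw [hsum]; exact_mod_cast sum_divisors_pow_le (n + 1) k
    _ ≤ ((n : ℝ) + 1) ^ 6 :=
      pow_le_pow_right₀ (by linarith [n.cast_nonneg (α := ℝ)]) (by omega)
    _ ≤ 100 ^ n := nat_add_one_pow_six_le_hundred_pow n

lemma norm_tsum_mul_pow_succ_sub_le {a : ℕ → ℂ} {C : ℝ} {q : ℂ} (ha : ∀ n, ‖a n‖ ≤ C ^ n)
    (ha₀ : a 0 = 1) (hq : C * ‖q‖ < 1) :
    ‖(∑' n, a n * q ^ (n + 1)) - q‖ ≤ C * ‖q‖ ^ 2 / (1 - C * ‖q‖) := by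
  have hC : 0 ≤ C := (norm_nonneg _).trans (by simpa using ha 1)
  have hCq : 0 ≤ C * ‖q‖ := by positivity
  have hterm : ∀ n, ‖a n * q ^ (n + 1)‖ ≤ ‖q‖ * (C * ‖q‖) ^ n := fun n => by
    rw [norm_mul, norm_pow]
    calc ‖a n‖ * ‖q‖ ^ (n + 1) ≤ C ^ n * ‖q‖ ^ (n + 1) := by gcongr; exact ha n
      _ = ‖q‖ * (C * ‖q‖) ^ n := by ring
  have hsum : Summable fun n => a n * q ^ (n + 1) :=
    Summable.of_norm_bounded ((summable_geometric_of_lt_one hCq hq).mul_left ‖q‖) hterm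
  rw [hsum.tsum_eq_zero_add, ha₀, zero_add, pow_one, one_mul, add_sub_cancel_left,
    div_eq_mul_inv]
  refine tsum_of_norm_bounded ((hasSum_geometric_of_lt_one hCq hq).mul_left (C * ‖q‖ ^ 2))
    fun n => (hterm (n + 1)).trans_eq ?_
  ring

noncomputable def sigmaSeries (k : ℕ) (q : ℂ) : ℂ :=
  ∑' n : ℕ, (∑ d ∈ (n + 1).divisors, (d : ℂ) ^ k) * q ^ (n + 1)

lemma norm_sigmaSeries_sub_le {k : ℕ} (hk : k ≤ 5) {q : ℂ} (hq : ‖q‖ ≤ 1e-4) :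
    ‖sigmaSeries k q - q‖ ≤ 102 * ‖q‖ ^ 2 := by
  have hq' : 100 * ‖q‖ < 1 := by linarith
  refine (norm_tsum_mul_pow_succ_sub_le (norm_sum_divisors_pow_le_hundred_pow hk)
    (by simp) hq').trans ?_
  rw [div_le_iff₀ (by linarith)]
  nlinarith [sq_nonneg ‖q‖, norm_nonneg q]

section EisensteinQuotient

variable {A B q : ℂ}

lemma norm_le_of_norm_sub_le_sq (hq : ‖q‖ ≤ 1e-4) (hA : ‖A - q‖ ≤ 102 * ‖q‖ ^ 2) :
    ‖A‖ ≤ 1.011 * ‖q‖ :=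
  calc ‖A‖ ≤ ‖A - q‖ + ‖q‖ := norm_le_norm_sub_add A q
    _ ≤ 1.011 * ‖q‖ := by nlinarith [norm_nonneg q]

lemma norm_one_add_cube_sub_one_le (hq : ‖q‖ ≤ 1e-4) (hA : ‖A - q‖ ≤ 102 * ‖q‖ ^ 2) :
    ‖(1 + 240 * A) ^ 3 - 1‖ ≤ 760 * ‖q‖ := by
  have hA' := norm_le_of_norm_sub_le_sq hq hA
  have hx := norm_nonneg q
  calc ‖(1 + 240 * A) ^ 3 - 1‖ = ‖720 * A + 172800 * A ^ 2 + 13824000 * A ^ 3‖ := by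
        ring_nf
    _ ≤ 720 * ‖A‖ + 172800 * ‖A‖ ^ 2 + 13824000 * ‖A‖ ^ 3 := by
      refine (norm_add₃_le ..).trans_eq ?_; simp [norm_pow]
    _ ≤ 760 * ‖q‖ := by
      nlinarith [pow_le_pow_left₀ (norm_nonneg A) hA' 2, pow_le_pow_left₀ (norm_nonneg A) hA' 3,
        mul_le_mul_of_nonneg_left hq (pow_nonneg hx 2), mul_le_mul_of_nonneg_left hq hx]

lemma norm_discr_sub_le (hq : ‖q‖ ≤ 1e-4) (hA : ‖A - q‖ ≤ 102 * ‖q‖ ^ 2)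
    (hB : ‖B - q‖ ≤ 102 * ‖q‖ ^ 2) :
    ‖(1 + 240 * A) ^ 3 - (1 - 504 * B) ^ 2 - 1728 * q‖ ≤ 616000 * ‖q‖ ^ 2 := by
  have hA' := norm_le_of_norm_sub_le_sq hq hA
  have hB' := norm_le_of_norm_sub_le_sq hq hB
  have hx := norm_nonneg q
  calc ‖(1 + 240 * A) ^ 3 - (1 - 504 * B) ^ 2 - 1728 * q‖
      = ‖720 * (A - q) + 1008 * (B - q) + 172800 * A ^ 2 - 254016 * B ^ 2
          + 13824000 * A ^ 3‖ := by ring_nf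
    _ ≤ 720 * ‖A - q‖ + 1008 * ‖B - q‖ + 172800 * ‖A‖ ^ 2 + 254016 * ‖B‖ ^ 2
          + 13824000 * ‖A‖ ^ 3 := by
      refine (norm_add_le _ _).trans (add_le_add_left ((norm_sub_le _ _).trans
        (add_le_add_left (norm_add₃_le ..) _)) _) |>.trans_eq ?_
      simp [norm_pow]
    _ ≤ 616000 * ‖q‖ ^ 2 := by
      nlinarith [pow_le_pow_left₀ (norm_nonneg A) hA' 2, pow_le_pow_left₀ (norm_nonneg B) hB' 2,
        pow_le_pow_left₀ (norm_nonneg A) hA' 3, mul_le_mul_of_nonneg_left hq (pow_nonneg hx 2)]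

lemma norm_eisenstein_quotient_mul_sub_one_le (hq : ‖q‖ ≤ 1e-4)
    (hA : ‖A - q‖ ≤ 102 * ‖q‖ ^ 2) (hB : ‖B - q‖ ≤ 102 * ‖q‖ ^ 2) (hq₀ : q ≠ 0) :
    ‖1728 * (1 + 240 * A) ^ 3 / ((1 + 240 * A) ^ 3 - (1 - 504 * B) ^ 2) * q - 1‖
      ≤ 1250 * ‖q‖ := by
  set E := (1 + 240 * A) ^ 3
  set D := E - (1 - 504 * B) ^ 2
  have hE : ‖E - 1‖ ≤ 760 * ‖q‖ := norm_one_add_cube_sub_one_le hq hA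
  have hD : ‖D - 1728 * q‖ ≤ 616000 * ‖q‖ ^ 2 := norm_discr_sub_le hq hA hB
  have hx : 0 < ‖q‖ := norm_pos_iff.2 hq₀
  have hD_ge : 1600 * ‖q‖ ≤ ‖D‖ := by
    have := norm_sub_norm_le (1728 * q) D
    rw [norm_sub_rev (1728 * q) D, norm_mul, Complex.norm_ofNat] at this
    nlinarith
  have hD₀ : D ≠ 0 := norm_pos_iff.1 (by linarith)
  have hnum : ‖1728 * q * (E - 1) - (D - 1728 * q)‖ ≤ 1250 * ‖q‖ * (1600 * ‖q‖) :=
    calc ‖1728 * q * (E - 1) - (D - 1728 * q)‖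
        ≤ 1728 * ‖q‖ * ‖E - 1‖ + ‖D - 1728 * q‖ := by
          refine (norm_sub_le _ _).trans_eq ?_; simp
      _ ≤ 1250 * ‖q‖ * (1600 * ‖q‖) := by nlinarith [mul_le_mul_of_nonneg_left hE hx.le]
  calc ‖1728 * E / D * q - 1‖ = ‖1728 * q * (E - 1) - (D - 1728 * q)‖ / ‖D‖ := by
        rw [← norm_div]; congr 1; field_simp; ring
    _ ≤ 1250 * ‖q‖ := by
        rw [div_le_iff₀ (by linarith)]
        exact hnum.trans (by gcongr)

end EisensteinQuotient

lemma norm_exp_two_pi_I_mul (σ : ℂ) : ‖cexp (2 * π * I * σ)‖ = rexp (-(2 * π * σ.im)) := by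
  rw [Complex.norm_exp]
  simp [Complex.mul_re, Complex.mul_im]

lemma eleven_thousand_five_hundred_lt_exp_three_pi : 11500 < rexp (3 * π) := by
  have h9 : 8103 < rexp 9 := by
    rw [show rexp 9 = rexp 1 ^ 9 by rw [← Real.exp_nat_mul]; norm_num]
    calc (8103 : ℝ) < 2.7182818283 ^ 9 := by norm_num
      _ < rexp 1 ^ 9 := by gcongr; exact Real.exp_one_gt_d9
  calc (11500 : ℝ) < 8103 * (0.42 + 1) := by norm_num
    _ ≤ rexp 9 * rexp 0.42 := by gcongr; exact Real.add_one_le_exp _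
    _ = rexp (9 + 0.42) := (Real.exp_add _ _).symm
    _ ≤ rexp (3 * π) := by gcongr; linarith [Real.pi_gt_d6]

lemma norm_exp_two_pi_I_mul_le (σ : ℂ) (hσ : 3 / 2 ≤ σ.im) :
    ‖cexp (2 * π * I * σ)‖ ≤ 1 / 11500 := by
  rw [norm_exp_two_pi_I_mul]
  calc rexp (-(2 * π * σ.im)) ≤ rexp (-(3 * π)) :=
      Real.exp_le_exp.2 (by nlinarith [Real.pi_pos])
    _ = (rexp (3 * π))⁻¹ := Real.exp_neg _
    _ ≤ 1 / 11500 := by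
      rw [one_div]
      exact inv_anti₀ (by norm_num) eleven_thousand_five_hundred_lt_exp_three_pi.le

lemma abs_norm_klj_mul_sub_one_le (σ : ℂ) (hσ : 3 / 2 ≤ σ.im) :
    |‖klj σ‖ * ‖cexp (2 * π * I * σ)‖ - 1| ≤ 1250 * ‖cexp (2 * π * I * σ)‖ := by
  have hq : ‖cexp (2 * π * I * σ)‖ ≤ 1e-4 :=
    (norm_exp_two_pi_I_mul_le σ hσ).trans (by norm_num)
  have hj := norm_eisenstein_quotient_mul_sub_one_le hq
    (norm_sigmaSeries_sub_le (k := 3) (by norm_num) hq)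
    (norm_sigmaSeries_sub_le (k := 5) (by norm_num) hq) (Complex.exp_ne_zero _)
  rw [← norm_mul, ← norm_one (α := ℂ)]
  exact (abs_norm_sub_norm_le _ _).trans hj

section Scaling

variable {e J : ℝ}

lemma ten_pow_eight_le_of_abs_mul_sq_sub_one_le (he₀ : 0 < e) (he : e ≤ 1 / 11500)
    (hJ : |J * e ^ 2 - 1| ≤ 1250 * e ^ 2) : 10 ^ 8 ≤ J := by
  have hJl : 1 - 1250 * e ^ 2 ≤ J * e ^ 2 := by linarith [(abs_le.1 hJ).1]
  have he2 : e ^ 2 * 132250000 ≤ 1 := by nlinarith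
  exact le_of_mul_le_mul_right (by nlinarith) (by positivity : 0 < e ^ 2)

lemma sq_bounds_of_abs_mul_pow_four_sub_one_le (he₀ : 0 < e) (he : e ≤ 1 / 11500)
    (hJ : |J * e ^ 2 - 1| ≤ 1250 * e ^ 2) {K : ℝ} (hK : |K * e ^ 4 - 1| ≤ 1250 * e ^ 4) :
    0.98 * J ^ 2 ≤ K ∧ K ≤ 1.02 * J ^ 2 := by
  have hJl : 1 - 1250 * e ^ 2 ≤ J * e ^ 2 := by linarith [(abs_le.1 hJ).1]
  have hJu : J * e ^ 2 ≤ 1 + 1250 * e ^ 2 := by linarith [(abs_le.1 hJ).2]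
  have hKl : 1 - 1250 * e ^ 4 ≤ K * e ^ 4 := by linarith [(abs_le.1 hK).1]
  have hKu : K * e ^ 4 ≤ 1 + 1250 * e ^ 4 := by linarith [(abs_le.1 hK).2]
  have he2 : e ^ 2 * 132250000 ≤ 1 := by nlinarith
  have he4 : (0 : ℝ) < e ^ 4 := by positivity
  have hJe : (J * e ^ 2) ^ 2 = J ^ 2 * e ^ 4 := by ring
  constructor
  · refine le_of_mul_le_mul_right ?_ he4
    nlinarith [mul_le_mul hJu hJu (by nlinarith) (by nlinarith)]
  · refine le_of_mul_le_mul_right ?_ he4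
    nlinarith [mul_le_mul hJl hJl (by nlinarith) (by nlinarith)]

lemma sqrt_bounds_of_abs_mul_sub_one_le (he₀ : 0 < e) (he : e ≤ 1 / 11500)
    (hJ : |J * e ^ 2 - 1| ≤ 1250 * e ^ 2) {H : ℝ} (hH : |H * e - 1| ≤ 1250 * e) :
    0.83 * √J ≤ H ∧ H ≤ 1.17 * √J := by
  have hJl : 1 - 1250 * e ^ 2 ≤ J * e ^ 2 := by linarith [(abs_le.1 hJ).1]
  have hJu : J * e ^ 2 ≤ 1 + 1250 * e ^ 2 := by linarith [(abs_le.1 hJ).2]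
  have hHl : 1 - 1250 * e ≤ H * e := by linarith [(abs_le.1 hH).1]
  have hHu : H * e ≤ 1 + 1250 * e := by linarith [(abs_le.1 hH).2]
  have hJ₀ : 0 ≤ J :=
    le_trans (by norm_num) (ten_pow_eight_le_of_abs_mul_sq_sub_one_le he₀ he hJ)
  have hH₀ : 0 ≤ H := nonneg_of_mul_nonneg_left (by nlinarith) he₀
  have he2 : (0 : ℝ) < e ^ 2 := by positivity
  have hHe : (H * e) ^ 2 = H ^ 2 * e ^ 2 := by ring
  constructor
  · refine (pow_le_pow_iff_left₀ (by positivity) hH₀ two_ne_zero).1 ?_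
    rw [mul_pow, Real.sq_sqrt hJ₀]
    refine le_of_mul_le_mul_right ?_ he2
    nlinarith [mul_le_mul hHl hHl (by nlinarith) (by nlinarith)]
  · refine (pow_le_pow_iff_left₀ hH₀ (by positivity) two_ne_zero).1 ?_
    rw [mul_pow, Real.sq_sqrt hJ₀]
    refine le_of_mul_le_mul_right ?_ he2
    nlinarith [mul_le_mul hHu hHu (by nlinarith) (by nlinarith)]

end Scaling

theorem j_sizes_for_large_im_general (τ : ℂ) (him : 3 ≤ τ.im) :
    10 ^ 8 ≤ ‖klj τ‖ ∧
    0.98 * ‖klj τ‖ ^ 2 ≤ ‖klj (2 * τ)‖ ∧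
    ‖klj (2 * τ)‖ ≤ 1.02 * ‖klj τ‖ ^ 2 ∧
    0.83 * Real.sqrt (‖klj τ‖) ≤ ‖klj (τ / 2)‖ ∧
    ‖klj (τ / 2)‖ ≤ 1.17 * Real.sqrt (‖klj τ‖) ∧
    0.83 * Real.sqrt (‖klj τ‖) ≤ ‖klj ((τ + 1) / 2)‖ ∧
    ‖klj ((τ + 1) / 2)‖ ≤ 1.17 * Real.sqrt (‖klj τ‖) := by
  have him_2τ : (2 * τ).im = 2 * τ.im := by simp
  have him_τ2 : (τ / 2).im = τ.im / 2 := by simp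
  have him_τ2' : ((τ + 1) / 2).im = τ.im / 2 := by simp
  set e := ‖cexp (2 * π * I * (τ / 2))‖ with he_def
  have he₀ : 0 < e := norm_pos_iff.2 (Complex.exp_ne_zero _)
  have he : e ≤ 1 / 11500 := norm_exp_two_pi_I_mul_le _ (by linarith)
  have hq_τ : ‖cexp (2 * π * I * τ)‖ = e ^ 2 := by
    rw [he_def, ← norm_pow, ← Complex.exp_nat_mul]; ring_nf
  have hq_2τ : ‖cexp (2 * π * I * (2 * τ))‖ = e ^ 4 := by
    rw [he_def, ← norm_pow, ← Complex.exp_nat_mul]; ring_nf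
  have hq_τ2' : ‖cexp (2 * π * I * ((τ + 1) / 2))‖ = e := by
    rw [he_def, norm_exp_two_pi_I_mul, norm_exp_two_pi_I_mul, him_τ2, him_τ2']
  have hJ := abs_norm_klj_mul_sub_one_le τ (by linarith)
  have hK := abs_norm_klj_mul_sub_one_le (2 * τ) (by linarith)
  have hH := abs_norm_klj_mul_sub_one_le (τ / 2) (by linarith)
  have hH' := abs_norm_klj_mul_sub_one_le ((τ + 1) / 2) (by linarith)
  rw [hq_τ] at hJ
  rw [hq_2τ] at hK
  rw [hq_τ2'] at hH'
  obtain ⟨h2τ_ge, h2τ_le⟩ := sq_bounds_of_abs_mul_pow_four_sub_one_le he₀ he hJ hK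
  obtain ⟨hτ2_ge, hτ2_le⟩ := sqrt_bounds_of_abs_mul_sub_one_le he₀ he hJ hH
  obtain ⟨hτ2'_ge, hτ2'_le⟩ := sqrt_bounds_of_abs_mul_sub_one_le he₀ he hJ hH'
  exact ⟨ten_pow_eight_le_of_abs_mul_sq_sub_one_le he₀ he hJ, h2τ_ge, h2τ_le, hτ2_ge, hτ2_le,
    hτ2'_ge, hτ2'_le⟩

theorem j_sizes_for_large_im (τ : ℂ) (hτ : τ ∈ Fdom) (him : 3 ≤ τ.im) :
    10 ^ 8 ≤ ‖klj τ‖ ∧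
    0.98 * ‖klj τ‖ ^ 2 ≤ ‖klj (2 * τ)‖ ∧
    ‖klj (2 * τ)‖ ≤ 1.02 * ‖klj τ‖ ^ 2 ∧
    0.83 * Real.sqrt (‖klj τ‖) ≤ ‖klj (τ / 2)‖ ∧
    ‖klj (τ / 2)‖ ≤ 1.17 * Real.sqrt (‖klj τ‖) ∧
    0.83 * Real.sqrt (‖klj τ‖) ≤ ‖klj ((τ + 1) / 2)‖ ∧
    ‖klj ((τ + 1) / 2)‖ ≤ 1.17 * Real.sqrt (‖klj τ‖) :=
  j_sizes_for_large_im_general τ him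
end

section
/- For every τ ∈ F with Im τ ≥ 3, |j(2τ) − (j(τ)² − 2·744·j(τ) − 2·196884 + 744² + 744)| ≤ 0.4. -/
open Complex Real Filter

/-!
Write `q = e^{2πiτ}`, so `|q| ≤ e^{-6π} < 7·10⁻⁹`. Truncating the `q`-series of `E₄` and `E₆`
after `q³` (the tails are geometric, since `σₖ(n) ≤ nᵏ⁺¹ ≤ 2⁽ᵏ⁺¹⁾⁽ⁿ⁻¹⁾`) gives
`j(τ) = q⁻¹ + 744 + 196884 q + E(q)` with `|E(q)| ≤ 2.2·10⁷ |q|²`. Substituting this expansion at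
`q` and at `q²` (the nome of `2τ`), the terms `q⁻²`, `1488 q⁻¹` and the constants cancel exactly,
and what is left is dominated by `2 q⁻¹ E(q)`, of size at most `4.4·10⁷ |q| < 0.31`.
-/

open Finset

theorem norm_sum_divisors_pow_le (k n : ℕ) :
    ‖∑ d ∈ (n + 1).divisors, (d : ℂ) ^ k‖ ≤ ((2 : ℝ) ^ (k + 1)) ^ n := by
  have hσ : ∑ d ∈ (n + 1).divisors, (d : ℂ) ^ k = (ArithmeticFunction.sigma k (n + 1) : ℕ) := by
    simp [ArithmeticFunction.sigma_apply]
  rw [hσ, Complex.norm_natCast, ← pow_mul, mul_comm, pow_mul]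
  exact_mod_cast (ArithmeticFunction.sigma_le_pow_succ k (n + 1)).trans
    (Nat.pow_le_pow_left Nat.lt_two_pow_self _)

theorem norm_tsum_mul_pow_succ_sub_sum_le {𝕜 : Type*} [NormedField 𝕜] [CompleteSpace 𝕜]
    {a : ℕ → 𝕜} {ρ : ℝ} (ha : ∀ n, ‖a n‖ ≤ ρ ^ n) {x : 𝕜} (hx : ρ * ‖x‖ < 1) (N : ℕ) :
    ‖∑' n, a n * x ^ (n + 1) - ∑ n ∈ range N, a n * x ^ (n + 1)‖ ≤
      ρ ^ N * ‖x‖ ^ (N + 1) / (1 - ρ * ‖x‖) := by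
  have hρ : 0 ≤ ρ := (norm_nonneg _).trans (by simpa using ha 1)
  have hterm : ∀ n, ‖a n * x ^ (n + 1)‖ ≤ ‖x‖ * (ρ * ‖x‖) ^ n := fun n => by
    rw [norm_mul, norm_pow, mul_pow, pow_succ]
    calc ‖a n‖ * (‖x‖ ^ n * ‖x‖) ≤ ρ ^ n * (‖x‖ ^ n * ‖x‖) := by gcongr; exact ha n
      _ = ‖x‖ * (ρ ^ n * ‖x‖ ^ n) := by ring
  have hgeom := hasSum_geometric_of_lt_one (by positivity) hx
  have hsum : Summable fun n => a n * x ^ (n + 1) :=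
    (hgeom.summable.mul_left ‖x‖).of_norm_bounded hterm
  rw [← hsum.sum_add_tsum_nat_add N, add_sub_cancel_left]
  calc ‖∑' n, a (n + N) * x ^ (n + N + 1)‖
      ≤ ‖x‖ * (ρ * ‖x‖) ^ N * (1 - ρ * ‖x‖)⁻¹ :=
        tsum_of_norm_bounded (hgeom.mul_left _) fun n => (hterm (n + N)).trans_eq (by ring)
    _ = ρ ^ N * ‖x‖ ^ (N + 1) / (1 - ρ * ‖x‖) := by ring

theorem norm_pow_sub_pow_le {R : Type*} [NormedCommRing R] [NormOneClass R] {u p : R} {M : ℝ}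
    (hu : ‖u‖ ≤ M) (hp : ‖p‖ ≤ M) (n : ℕ) : ‖u ^ n - p ^ n‖ ≤ n * M ^ (n - 1) * ‖u - p‖ := by
  have hM : 0 ≤ M := (norm_nonneg _).trans hu
  rw [← geom_sum₂_mul]
  refine (norm_mul_le _ _).trans (mul_le_mul_of_nonneg_right ?_ (norm_nonneg _))
  calc ‖∑ i ∈ range n, u ^ i * p ^ (n - 1 - i)‖
      ≤ ∑ i ∈ range n, ‖u‖ ^ i * ‖p‖ ^ (n - 1 - i) :=
        (norm_sum_le _ _).trans (sum_le_sum fun i _ =>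
          (norm_mul_le _ _).trans (mul_le_mul (norm_pow_le _ _) (norm_pow_le _ _)
            (norm_nonneg _) (by positivity)))
    _ ≤ ∑ i ∈ range n, M ^ (n - 1) := sum_le_sum fun i hi =>
        calc ‖u‖ ^ i * ‖p‖ ^ (n - 1 - i) ≤ M ^ i * M ^ (n - 1 - i) := by gcongr
          _ = M ^ (n - 1) := by
            rw [← pow_add, Nat.add_sub_cancel' (Nat.le_sub_one_of_lt (mem_range.1 hi))]
    _ = n * M ^ (n - 1) := by rw [sum_const, card_range, nsmul_eq_mul]

noncomputable def sigmaQSeries (k : ℕ) (q : ℂ) : ℂ :=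
  ∑' n : ℕ, (∑ d ∈ (n + 1).divisors, (d : ℂ) ^ k) * q ^ (n + 1)

noncomputable def E4q (q : ℂ) : ℂ := 1 + 240 * sigmaQSeries 3 q

noncomputable def E6q (q : ℂ) : ℂ := 1 - 504 * sigmaQSeries 5 q

noncomputable def kljq (q : ℂ) : ℂ := 1728 * E4q q ^ 3 / (E4q q ^ 3 - E6q q ^ 2)

def E4qTrunc (q : ℂ) : ℂ := 1 + 240 * q + 2160 * q ^ 2 + 6720 * q ^ 3

def E6qTrunc (q : ℂ) : ℂ := 1 - 504 * q - 16632 * q ^ 2 - 122976 * q ^ 3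

theorem norm_sigmaQSeries_sub_le (k : ℕ) {x : ℂ} (hx : 2 ^ (k + 1) * ‖x‖ < 1) :
    ‖sigmaQSeries k x - (x + (1 + 2 ^ k) * x ^ 2 + (1 + 3 ^ k) * x ^ 3)‖ ≤
      (2 ^ (k + 1)) ^ 3 * ‖x‖ ^ 4 / (1 - 2 ^ (k + 1) * ‖x‖) := by
  have hhead : ∑ n ∈ range 3, (∑ d ∈ (n + 1).divisors, (d : ℂ) ^ k) * x ^ (n + 1) =
      x + (1 + 2 ^ k) * x ^ 2 + (1 + 3 ^ k) * x ^ 3 := by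
    simp [sum_range_succ, show (2 : ℕ).divisors = {1, 2} by decide,
      show (3 : ℕ).divisors = {1, 3} by decide]
  rw [← hhead]
  exact norm_tsum_mul_pow_succ_sub_sum_le (norm_sum_divisors_pow_le k) hx 3

theorem norm_E4q_sub_E4qTrunc_le {x : ℂ} (hx : ‖x‖ ≤ 7e-9) :
    ‖E4q x - E4qTrunc x‖ ≤ 10 ^ 6 * ‖x‖ ^ 4 := by
  have hr : 0 < 1 - (2 : ℝ) ^ (3 + 1) * ‖x‖ := by norm_num; linarith
  have hsplit : E4q x - E4qTrunc x =
      240 * (sigmaQSeries 3 x - (x + (1 + 2 ^ 3) * x ^ 2 + (1 + 3 ^ 3) * x ^ 3)) := by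
    rw [E4q, E4qTrunc]; ring
  calc ‖E4q x - E4qTrunc x‖ ≤ 240 * ((2 ^ (3 + 1)) ^ 3 * ‖x‖ ^ 4 / (1 - 2 ^ (3 + 1) * ‖x‖)) := by
        rw [hsplit, norm_mul, Complex.norm_ofNat]
        exact mul_le_mul_of_nonneg_left (norm_sigmaQSeries_sub_le 3 (sub_pos.1 hr)) (by norm_num)
    _ ≤ 10 ^ 6 * ‖x‖ ^ 4 := by
        have hr4 := pow_nonneg (norm_nonneg x) 4
        rw [mul_div_assoc', div_le_iff₀ hr]; norm_num
        nlinarith [mul_le_mul_of_nonneg_right hx hr4]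

theorem norm_E6q_sub_E6qTrunc_le {x : ℂ} (hx : ‖x‖ ≤ 7e-9) :
    ‖E6q x - E6qTrunc x‖ ≤ 1.4e8 * ‖x‖ ^ 4 := by
  have hr : 0 < 1 - (2 : ℝ) ^ (5 + 1) * ‖x‖ := by norm_num; linarith
  have hsplit : E6q x - E6qTrunc x =
      -504 * (sigmaQSeries 5 x - (x + (1 + 2 ^ 5) * x ^ 2 + (1 + 3 ^ 5) * x ^ 3)) := by
    rw [E6q, E6qTrunc]; ring
  calc ‖E6q x - E6qTrunc x‖ ≤ 504 * ((2 ^ (5 + 1)) ^ 3 * ‖x‖ ^ 4 / (1 - 2 ^ (5 + 1) * ‖x‖)) := by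
        rw [hsplit, norm_mul, norm_neg, Complex.norm_ofNat]
        exact mul_le_mul_of_nonneg_left (norm_sigmaQSeries_sub_le 5 (sub_pos.1 hr)) (by norm_num)
    _ ≤ 1.4e8 * ‖x‖ ^ 4 := by
        have hr4 := pow_nonneg (norm_nonneg x) 4
        rw [mul_div_assoc', div_le_iff₀ hr]; norm_num
        nlinarith [mul_le_mul_of_nonneg_right hx hr4]

theorem norm_E4qTrunc_le {x : ℂ} (hx : ‖x‖ ≤ 7e-9) : ‖E4qTrunc x‖ ≤ 1.00001 :=
  calc ‖E4qTrunc x‖ ≤ 1 + 240 * ‖x‖ + 2160 * ‖x‖ ^ 2 + 6720 * ‖x‖ ^ 3 := by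
        apply_rules [norm_add_le_of_le, norm_sub_le_of_le] <;> simp
    _ ≤ 1 + 240 * 7e-9 + 2160 * (7e-9) ^ 2 + 6720 * (7e-9) ^ 3 := by gcongr
    _ ≤ 1.00001 := by norm_num

theorem norm_E6qTrunc_le {x : ℂ} (hx : ‖x‖ ≤ 7e-9) : ‖E6qTrunc x‖ ≤ 1.00001 :=
  calc ‖E6qTrunc x‖ ≤ 1 + 504 * ‖x‖ + 16632 * ‖x‖ ^ 2 + 122976 * ‖x‖ ^ 3 := by
        apply_rules [norm_add_le_of_le, norm_sub_le_of_le] <;> simp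
    _ ≤ 1 + 504 * 7e-9 + 16632 * (7e-9) ^ 2 + 122976 * (7e-9) ^ 3 := by gcongr
    _ ≤ 1.00001 := by norm_num

theorem norm_E4q_cube_sub_E4qTrunc_cube_le {x : ℂ} (hx : ‖x‖ ≤ 7e-9) :
    ‖E4q x ^ 3 - E4qTrunc x ^ 3‖ ≤ 4e6 * ‖x‖ ^ 4 := by
  have hdiff := norm_E4q_sub_E4qTrunc_le hx
  have htrunc := norm_E4qTrunc_le hx
  have hE : ‖E4q x‖ ≤ 1.00002 := by
    have := norm_le_norm_add_norm_sub' (E4q x) (E4qTrunc x)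
    have : ‖x‖ ^ 4 ≤ (7e-9) ^ 4 := by gcongr
    linarith
  calc ‖E4q x ^ 3 - E4qTrunc x ^ 3‖ ≤ 3 * 1.00002 ^ 2 * ‖E4q x - E4qTrunc x‖ := by
        simpa using norm_pow_sub_pow_le hE (htrunc.trans (by norm_num)) 3
    _ ≤ 4e6 * ‖x‖ ^ 4 := by nlinarith [pow_nonneg (norm_nonneg x) 4]

theorem norm_E6q_sq_sub_E6qTrunc_sq_le {x : ℂ} (hx : ‖x‖ ≤ 7e-9) :
    ‖E6q x ^ 2 - E6qTrunc x ^ 2‖ ≤ 3e8 * ‖x‖ ^ 4 := by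
  have hdiff := norm_E6q_sub_E6qTrunc_le hx
  have htrunc := norm_E6qTrunc_le hx
  have hE : ‖E6q x‖ ≤ 1.00002 := by
    have := norm_le_norm_add_norm_sub' (E6q x) (E6qTrunc x)
    have : ‖x‖ ^ 4 ≤ (7e-9) ^ 4 := by gcongr
    linarith
  calc ‖E6q x ^ 2 - E6qTrunc x ^ 2‖ ≤ 2 * 1.00002 * ‖E6q x - E6qTrunc x‖ := by
        simpa using norm_pow_sub_pow_le hE (htrunc.trans (by norm_num)) 2
    _ ≤ 3e8 * ‖x‖ ^ 4 := by nlinarith [pow_nonneg (norm_nonneg x) 4]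

-- For `u = E₄`, `v = E₆` this is `x (u³ - v²) (j - (x⁻¹ + 744 + 196884 x))`.
def kljNumerator (x u v : ℂ) : ℂ :=
  1728 * x * u ^ 3 - (1 + 744 * x + 196884 * x ^ 2) * (u ^ 3 - v ^ 2)

theorem norm_kljNumerator_E4qTrunc_E6qTrunc_le {x : ℂ} (hx : ‖x‖ ≤ 7e-9) :
    ‖kljNumerator x (E4qTrunc x) (E6qTrunc x)‖ ≤ 3.7143e10 * ‖x‖ ^ 4 := by
  -- It vanishes to order 4 because the truncations agree with `E₄`, `E₆` through `q³`.
  have hpoly : kljNumerator x (E4qTrunc x) (E6qTrunc x) =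
      x ^ 4 * (37142335296 + 602353594368 * x + 8282204570880 * x ^ 2 -
        60020324628480 * x ^ 3 - 3024306812399616 * x ^ 4 - 24632467808256000 * x ^ 5 -
        57314853421056000 * x ^ 6 - 59747294380032000 * x ^ 7) := by
    rw [kljNumerator, E4qTrunc, E6qTrunc]; ring
  rw [hpoly, norm_mul, norm_pow, mul_comm]
  gcongr
  calc _ ≤ 37142335296 + 602353594368 * ‖x‖ + 8282204570880 * ‖x‖ ^ 2 +
        60020324628480 * ‖x‖ ^ 3 + 3024306812399616 * ‖x‖ ^ 4 +
        24632467808256000 * ‖x‖ ^ 5 + 57314853421056000 * ‖x‖ ^ 6 +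
        59747294380032000 * ‖x‖ ^ 7 := by
        apply_rules [norm_add_le_of_le, norm_sub_le_of_le] <;> simp
    _ ≤ 37142335296 + 602353594368 * 7e-9 + 8282204570880 * (7e-9) ^ 2 +
        60020324628480 * (7e-9) ^ 3 + 3024306812399616 * (7e-9) ^ 4 +
        24632467808256000 * (7e-9) ^ 5 + 57314853421056000 * (7e-9) ^ 6 +
        59747294380032000 * (7e-9) ^ 7 := by gcongr
    _ ≤ 3.7143e10 := by norm_num

theorem norm_kljNumerator_le {x : ℂ} (hx : ‖x‖ ≤ 7e-9) :
    ‖kljNumerator x (E4q x) (E6q x)‖ ≤ 3.75e10 * ‖x‖ ^ 4 := by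
  have hsplit : kljNumerator x (E4q x) (E6q x) =
      (1728 * x - (1 + 744 * x + 196884 * x ^ 2)) * (E4q x ^ 3 - E4qTrunc x ^ 3) +
      (1 + 744 * x + 196884 * x ^ 2) * (E6q x ^ 2 - E6qTrunc x ^ 2) +
      kljNumerator x (E4qTrunc x) (E6qTrunc x) := by
    rw [kljNumerator, kljNumerator]; ring
  have hA : ‖1728 * x - (1 + 744 * x + 196884 * x ^ 2)‖ ≤ 1.0001 :=
    calc _ ≤ 1728 * ‖x‖ + (1 + 744 * ‖x‖ + 196884 * ‖x‖ ^ 2) := by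
          apply_rules [norm_add_le_of_le, norm_sub_le_of_le] <;> simp
      _ ≤ 1728 * 7e-9 + (1 + 744 * 7e-9 + 196884 * (7e-9) ^ 2) := by gcongr
      _ ≤ 1.0001 := by norm_num
  have hB : ‖1 + 744 * x + 196884 * x ^ 2‖ ≤ 1.00001 :=
    calc _ ≤ 1 + 744 * ‖x‖ + 196884 * ‖x‖ ^ 2 := by
          apply_rules [norm_add_le_of_le, norm_sub_le_of_le] <;> simp
      _ ≤ 1 + 744 * 7e-9 + 196884 * (7e-9) ^ 2 := by gcongr
      _ ≤ 1.00001 := by norm_num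
  have h4 := norm_E4q_cube_sub_E4qTrunc_cube_le hx
  have h6 := norm_E6q_sq_sub_E6qTrunc_sq_le hx
  have hT := norm_kljNumerator_E4qTrunc_E6qTrunc_le hx
  rw [hsplit]
  calc _ ≤ 1.0001 * (4e6 * ‖x‖ ^ 4) + 1.00001 * (3e8 * ‖x‖ ^ 4) + 3.7143e10 * ‖x‖ ^ 4 := by
        refine (norm_add₃_le ..).trans ?_
        simp only [norm_mul]
        gcongr
    _ ≤ 3.75e10 * ‖x‖ ^ 4 := by nlinarith [pow_nonneg (norm_nonneg x) 4]

theorem norm_E4qTrunc_cube_sub_E6qTrunc_sq_sub_le {x : ℂ} (hx : ‖x‖ ≤ 7e-9) :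
    ‖E4qTrunc x ^ 3 - E6qTrunc x ^ 2 - 1728 * x‖ ≤ 41473 * ‖x‖ ^ 2 := by
  have hpoly : E4qTrunc x ^ 3 - E6qTrunc x ^ 2 - 1728 * x =
      x ^ 2 * (-41472 + 435456 * x - 3661632 * x ^ 2 + 516865536 * x ^ 3 +
        15991962624 * x ^ 4 + 126572544000 * x ^ 5 + 292626432000 * x ^ 6 +
        303464448000 * x ^ 7) := by
    rw [E4qTrunc, E6qTrunc]; ring
  rw [hpoly, norm_mul, norm_pow, mul_comm]
  gcongr
  calc _ ≤ 41472 + 435456 * ‖x‖ + 3661632 * ‖x‖ ^ 2 + 516865536 * ‖x‖ ^ 3 +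
        15991962624 * ‖x‖ ^ 4 + 126572544000 * ‖x‖ ^ 5 + 292626432000 * ‖x‖ ^ 6 +
        303464448000 * ‖x‖ ^ 7 := by
        apply_rules [norm_add_le_of_le, norm_sub_le_of_le] <;> simp
    _ ≤ 41472 + 435456 * 7e-9 + 3661632 * (7e-9) ^ 2 + 516865536 * (7e-9) ^ 3 +
        15991962624 * (7e-9) ^ 4 + 126572544000 * (7e-9) ^ 5 + 292626432000 * (7e-9) ^ 6 +
        303464448000 * (7e-9) ^ 7 := by gcongr
    _ ≤ 41473 := by norm_num

theorem le_norm_E4q_cube_sub_E6q_sq {x : ℂ} (hx : ‖x‖ ≤ 7e-9) :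
    1727 * ‖x‖ ≤ ‖E4q x ^ 3 - E6q x ^ 2‖ := by
  have hsplit : E4q x ^ 3 - E6q x ^ 2 - 1728 * x =
      (E4q x ^ 3 - E4qTrunc x ^ 3) - (E6q x ^ 2 - E6qTrunc x ^ 2) +
      (E4qTrunc x ^ 3 - E6qTrunc x ^ 2 - 1728 * x) := by
    ring
  have hclose : ‖E4q x ^ 3 - E6q x ^ 2 - 1728 * x‖ ≤ ‖x‖ := by
    have hr := norm_nonneg x
    rw [hsplit]
    calc _ ≤ 4e6 * ‖x‖ ^ 4 + 3e8 * ‖x‖ ^ 4 + 41473 * ‖x‖ ^ 2 :=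
          norm_add_le_of_le (norm_sub_le_of_le (norm_E4q_cube_sub_E4qTrunc_cube_le hx)
            (norm_E6q_sq_sub_E6qTrunc_sq_le hx)) (norm_E4qTrunc_cube_sub_E6qTrunc_sq_sub_le hx)
      _ ≤ ‖x‖ := by nlinarith [pow_le_pow_left₀ hr hx 3, pow_nonneg hr 3]
  have := norm_sub_norm_le (1728 * x) (E4q x ^ 3 - E6q x ^ 2)
  rw [norm_sub_rev (1728 * x), norm_mul, Complex.norm_ofNat] at this
  linarith

theorem norm_kljq_sub_le {x : ℂ} (hx0 : x ≠ 0) (hx : ‖x‖ ≤ 7e-9) :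
    ‖kljq x - (x⁻¹ + 744 + 196884 * x)‖ ≤ 2.2e7 * ‖x‖ ^ 2 := by
  have hr : 0 < ‖x‖ := norm_pos_iff.2 hx0
  have hD := le_norm_E4q_cube_sub_E6q_sq hx
  have hD0 : E4q x ^ 3 - E6q x ^ 2 ≠ 0 := norm_pos_iff.1 (by linarith)
  have hrepr : kljq x - (x⁻¹ + 744 + 196884 * x) =
      kljNumerator x (E4q x) (E6q x) / (x * (E4q x ^ 3 - E6q x ^ 2)) := by
    rw [kljq, kljNumerator]; field_simp
  rw [hrepr, norm_div, norm_mul, div_le_iff₀ (by positivity)]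
  calc _ ≤ 3.75e10 * ‖x‖ ^ 4 := norm_kljNumerator_le hx
    _ ≤ 2.2e7 * ‖x‖ ^ 2 * (‖x‖ * (1727 * ‖x‖)) := by nlinarith [pow_nonneg hr.le 4]
    _ ≤ 2.2e7 * ‖x‖ ^ 2 * (‖x‖ * ‖E4q x ^ 3 - E6q x ^ 2‖) := by gcongr

theorem norm_kljq_sq_sub_le {q : ℂ} (hq0 : q ≠ 0) (hq : ‖q‖ ≤ 7e-9) :
    ‖kljq (q ^ 2) - (kljq q ^ 2 - 2 * 744 * kljq q - 2 * 196884 + 744 ^ 2 + 744)‖ ≤ 0.4 := by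
  have hr : 0 < ‖q‖ := norm_pos_iff.2 hq0
  obtain ⟨E₁, hE₁, hj₁⟩ : ∃ E : ℂ, ‖E‖ ≤ 2.2e7 * ‖q‖ ^ 2 ∧
      kljq q = q⁻¹ + 744 + 196884 * q + E :=
    ⟨_, norm_kljq_sub_le hq0 hq, by ring⟩
  obtain ⟨E₂, hE₂, hj₂⟩ : ∃ E : ℂ, ‖E‖ ≤ 2.2e7 * (‖q‖ ^ 2) ^ 2 ∧
      kljq (q ^ 2) = (q ^ 2)⁻¹ + 744 + 196884 * q ^ 2 + E := by
    refine ⟨_, ?_, (add_sub_cancel _ _).symm⟩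
    rw [← norm_pow]
    exact norm_kljq_sub_le (pow_ne_zero 2 hq0) (by rw [norm_pow]; nlinarith)
  have hcancel : kljq (q ^ 2) - (kljq q ^ 2 - 2 * 744 * kljq q - 2 * 196884 + 744 ^ 2 + 744) =
      E₂ - 2 * (q⁻¹ * E₁) - 393768 * q * E₁ - E₁ ^ 2 - 38763112572 * q ^ 2 := by
    rw [hj₁, hj₂]; field_simp; ring
  have hinv : ‖2 * (q⁻¹ * E₁)‖ ≤ 2 * (2.2e7 * ‖q‖) := by
    rw [norm_mul, norm_mul, norm_inv, Complex.norm_ofNat]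
    gcongr 2 * ?_
    rw [inv_mul_le_iff₀ hr]
    linarith
  rw [hcancel]
  calc _ ≤ 2.2e7 * (‖q‖ ^ 2) ^ 2 + 2 * (2.2e7 * ‖q‖) + 393768 * ‖q‖ * (2.2e7 * ‖q‖ ^ 2) +
        (2.2e7 * ‖q‖ ^ 2) ^ 2 + 38763112572 * ‖q‖ ^ 2 := by
        refine norm_sub_le_of_le (norm_sub_le_of_le (norm_sub_le_of_le
          (norm_sub_le_of_le hE₂ hinv) ?_) ?_) ?_ <;>
          simp only [norm_mul, norm_pow, Complex.norm_ofNat] <;> gcongr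
    _ ≤ 2.2e7 * ((7e-9) ^ 2) ^ 2 + 2 * (2.2e7 * 7e-9) + 393768 * 7e-9 * (2.2e7 * (7e-9) ^ 2) +
        (2.2e7 * (7e-9) ^ 2) ^ 2 + 38763112572 * (7e-9) ^ 2 := by gcongr
    _ ≤ 0.4 := by norm_num

theorem inv_lt_exp_six_pi : (7e-9 : ℝ)⁻¹ < Real.exp (6 * π) := by
  have h18 : (2.7182818283 : ℝ) ^ 18 < Real.exp 18 := by
    rw [show (18 : ℝ) = (18 : ℕ) by norm_num, ← Real.exp_one_pow]
    exact pow_lt_pow_left₀ Real.exp_one_gt_d9 (by norm_num) (by norm_num)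
  have hfrac : 1 + 0.849552 + 0.849552 ^ 2 / 2 ≤ Real.exp 0.849552 :=
    Real.quadratic_le_exp_of_nonneg (by norm_num)
  calc (7e-9 : ℝ)⁻¹ < 2.7182818283 ^ 18 * (1 + 0.849552 + 0.849552 ^ 2 / 2) := by norm_num
    _ ≤ Real.exp 18 * Real.exp 0.849552 := by gcongr
    _ = Real.exp 18.849552 := by rw [← Real.exp_add]; norm_num
    _ ≤ Real.exp (6 * π) := by gcongr; linarith [Real.pi_gt_d6]

theorem norm_exp_two_pi_I_mul_le_s3 {τ : ℂ} (him : 3 ≤ τ.im) :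
    ‖Complex.exp (2 * Real.pi * Complex.I * τ)‖ ≤ 7e-9 := by
  have hre : (2 * Real.pi * Complex.I * τ).re = -(2 * π * τ.im) := by simp
  rw [Complex.norm_exp, hre]
  calc Real.exp (-(2 * π * τ.im)) ≤ Real.exp (-(6 * π)) :=
        Real.exp_le_exp.2 (by nlinarith [Real.pi_pos])
    _ ≤ 7e-9 := by
        rw [Real.exp_neg]
        exact inv_le_of_inv_le₀ (by norm_num) inv_lt_exp_six_pi.le

theorem j_two_tau_near_polynomial_in_j_general (τ : ℂ) (him : 3 ≤ τ.im) :
    ‖klj (2 * τ) -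
      (klj τ ^ 2 - 2 * 744 * klj τ - 2 * 196884 + 744 ^ 2 + 744)‖ ≤ 0.4 := by
  have hq2 : Complex.exp (2 * Real.pi * Complex.I * (2 * τ)) =
      Complex.exp (2 * Real.pi * Complex.I * τ) ^ 2 := by
    rw [← Complex.exp_nat_mul]; ring_nf
  have hklj : ∀ z, klj z = kljq (Complex.exp (2 * Real.pi * Complex.I * z)) := fun _ => rfl
  rw [hklj, hklj, hq2]
  exact norm_kljq_sq_sub_le (Complex.exp_ne_zero _) (norm_exp_two_pi_I_mul_le_s3 him)

theorem j_two_tau_near_polynomial_in_j (τ : ℂ) (hτ : τ ∈ Fdom) (him : 3 ≤ τ.im) :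
    ‖klj (2 * τ) -
      (klj τ ^ 2 - 2 * 744 * klj τ - 2 * 196884 + 744 ^ 2 + 744)‖ ≤ 0.4 :=
  j_two_tau_near_polynomial_in_j_general τ him
end

section
/- For every integer k ≥ 0, ∑_{n=1}^∞ (2πn)^k · e^{−πn} ≤ 14^k · k!. -/
/-!
Since `(x/2)^k / k! ≤ exp (x/2)`, we have `x^k e^{-x} ≤ 2^k k! e^{-x/2}`. With `x = a(n+1)` and
`e^{-a/2} ≤ 1/2` (i.e. `a ≥ 2 log 2`, true for `a = π`) the terms are dominated by the geometric
series `2^k k! 2^{-(n+1)}`, whose sum is `2^k k!`. For `a = π` this gives `2^k · 2^k k! ≤ 14^k k!`.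
-/

open Real

lemma pow_mul_exp_neg_le {x : ℝ} (hx : 0 ≤ x) (k : ℕ) :
    x ^ k * exp (-x) ≤ 2 ^ k * k.factorial * exp (-(x / 2)) := by
  have hhalf : (x / 2) ^ k ≤ k.factorial * exp (x / 2) :=
    (div_le_iff₀' (by positivity)).1 (pow_div_factorial_le_exp _ (by positivity) k)
  calc x ^ k * exp (-x) = 2 ^ k * (x / 2) ^ k * exp (-(x / 2)) * exp (-(x / 2)) := by
        rw [mul_assoc _ (exp _), ← exp_add, ← mul_pow]
        ring_nf
    _ ≤ 2 ^ k * (k.factorial * exp (x / 2)) * exp (-(x / 2)) * exp (-(x / 2)) := by gcongr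
    _ = 2 ^ k * k.factorial * exp (-(x / 2)) := by
        rw [mul_assoc (2 ^ k : ℝ), mul_assoc _ (exp _), ← exp_add, add_neg_cancel, exp_zero]
        ring

lemma exp_neg_mul_nat_div_two_le_half_pow {a : ℝ} (ha : 2 * log 2 ≤ a) (n : ℕ) :
    exp (-(a * n / 2)) ≤ (1 / 2) ^ n := by
  have hbase : exp (-(a / 2)) ≤ 1 / 2 :=
    calc exp (-(a / 2)) ≤ exp (-log 2) := exp_le_exp.2 (by linarith)
      _ = 1 / 2 := by rw [exp_neg, exp_log two_pos, one_div]
  calc exp (-(a * n / 2)) = exp (-(a / 2)) ^ n := by rw [← exp_nat_mul]; ring_nf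
    _ ≤ (1 / 2) ^ n := by gcongr

theorem tsum_pow_mul_exp_neg_le {a : ℝ} (ha : 2 * log 2 ≤ a) (k : ℕ) :
    ∑' n : ℕ, (a * ((n : ℝ) + 1)) ^ k * exp (-(a * ((n : ℝ) + 1)))
      ≤ 2 ^ k * k.factorial := by
  have ha0 : 0 ≤ a := le_trans (by positivity) ha
  have hgeom : HasSum (fun n : ℕ => (2 : ℝ) ^ k * k.factorial / 2 / 2 ^ n) (2 ^ k * k.factorial) :=
    hasSum_geometric_two' (2 ^ k * k.factorial : ℝ)
  have hterm (n : ℕ) : (a * ((n : ℝ) + 1)) ^ k * exp (-(a * ((n : ℝ) + 1)))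
      ≤ 2 ^ k * k.factorial / 2 / 2 ^ n := by
    calc _ ≤ 2 ^ k * k.factorial * exp (-(a * ((n + 1 : ℕ) : ℝ) / 2)) := by
          push_cast
          exact pow_mul_exp_neg_le (by positivity) k
      _ ≤ 2 ^ k * k.factorial * (1 / 2) ^ (n + 1) := by
          gcongr
          exact exp_neg_mul_nat_div_two_le_half_pow ha _
      _ = 2 ^ k * k.factorial / 2 / 2 ^ n := by
          rw [one_div_pow, pow_succ]
          field_simp
  have hsum : Summable fun n : ℕ => (a * ((n : ℝ) + 1)) ^ k * exp (-(a * ((n : ℝ) + 1))) :=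
    hgeom.summable.of_nonneg_of_le (fun n => by positivity) hterm
  exact hasSum_le hterm hsum.hasSum hgeom

theorem exp_weighted_power_sum_le (k : ℕ) :
    ∑' n : ℕ, (2 * Real.pi * ((n : ℝ) + 1)) ^ k * Real.exp (-(Real.pi * ((n : ℝ) + 1)))
      ≤ 14 ^ k * (k.factorial : ℝ) := by
  have hpi : 2 * log 2 ≤ π := by linarith [log_two_lt_d9, pi_gt_three]
  calc _ = 2 ^ k * ∑' n : ℕ, (π * ((n : ℝ) + 1)) ^ k * exp (-(π * ((n : ℝ) + 1))) := by
        rw [← tsum_mul_left]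
        simp_rw [mul_assoc, mul_pow, mul_assoc]
    _ ≤ 2 ^ k * (2 ^ k * k.factorial) := by gcongr; exact tsum_pow_mul_exp_neg_le hpi k
    _ = 4 ^ k * k.factorial := by rw [← mul_assoc, ← mul_pow]; norm_num
    _ ≤ 14 ^ k * k.factorial := by gcongr; norm_num
end

section
/- Let τ ∈ F. (a) If τ = i + δ with |δ| ≤ 2^{−30}, then |2τ − (−2/τ)| ≥ 3.99·|δ|, the point 1 − 2/(τ+1) satisfies |(1 − 2/(τ+1)) − i| ≤ 2|δ|, and any point w with |w − i| ≤ 2^{−28} satisfies |w − 2τ| ≥ 0.99 and |w − (−2/τ)| ≥ 0.99. (b) If τ = (1+i√3)/2 + δ with |δ| ≤ 2^{−30}, then the three points 2τ−1, 1−2/τ, and −1−2/(τ−1) are pairwise at distance at least 3.46·|δ| from each other. -/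
open Complex Real Filter

/-!
Near `i`, write `τ = i + δ`. Then `2τ + 2/τ = 2(τ² + 1)/τ` with `τ² + 1 = δ(δ + 2i)`, and
`1 - 2/(τ + 1) - i = (1 - i)δ/(τ + 1)`, so these are `|δ|` times factors close to `4` and `1`.
Moreover `2τ` and `-2/τ` are close to `2i`, which is at distance `1` from `i`.

Near `ρ = (1 + i√3)/2`, write `τ = ρ + δ`. The three pairwise differences are `2(τ² - τ + 1)`
divided by `τ`, `τ - 1` and `τ(τ - 1)`, all of norm close to `1`, and
`τ² - τ + 1 = δ(δ + i√3)`; this gives the factor `2√3 > 3.46`.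
-/

local notation "ρ" => ((1 + Complex.I * Real.sqrt 3) / 2 : ℂ)

lemma ne_zero_of_eq_add_of_norm_lt {E : Type*} [SeminormedAddGroup E] {τ a δ : E}
    (h : τ = a + δ) (hδ : ‖δ‖ < ‖a‖) : τ ≠ 0 := by
  rintro rfl
  rw [eq_neg_of_add_eq_zero_right h.symm, norm_neg] at hδ
  exact lt_irrefl _ hδ

section NormedField

variable {𝕜 : Type*} [NormedField 𝕜]

lemma norm_mul_sub_norm_le_norm_mul_add (a δ : 𝕜) : ‖δ‖ * (‖a‖ - ‖δ‖) ≤ ‖δ * (δ + a)‖ := by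
  rw [norm_mul, add_comm]
  exact mul_le_mul_of_nonneg_left (norm_sub_le_norm_add a δ) (norm_nonneg δ)

lemma le_norm_div_of_mul_le {x y : 𝕜} {c B : ℝ} (hc : 0 ≤ c) (hy : y ≠ 0) (hyB : ‖y‖ ≤ B)
    (hx : c * B ≤ ‖x‖) : c ≤ ‖x / y‖ := by
  rw [norm_div, le_div_iff₀ (norm_pos_iff.2 hy)]
  exact (mul_le_mul_of_nonneg_left hyB hc).trans hx

end NormedField

section NearI

variable {τ δ : ℂ}

lemma sq_add_one_eq_of_eq_I_add (h : τ = I + δ) : τ ^ 2 + 1 = δ * (δ + 2 * I) := by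
  subst h; linear_combination I_sq

lemma le_norm_two_mul_sub_neg_two_div (h : τ = I + δ) (hδ : ‖δ‖ ≤ 1 / 1000) :
    3.99 * ‖δ‖ ≤ ‖2 * τ - (-2 / τ)‖ := by
  have hτ : τ ≠ 0 := ne_zero_of_eq_add_of_norm_lt h (by rw [norm_I]; linarith)
  have hq := norm_mul_sub_norm_le_norm_mul_add (2 * I) δ
  rw [norm_mul, Complex.norm_two, norm_I, ← sq_add_one_eq_of_eq_I_add h] at hq
  have key : 2 * τ - (-2 / τ) = 2 * (τ ^ 2 + 1) / τ := by field_simp; ring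
  have hτB : ‖τ‖ ≤ 1 + ‖δ‖ := by simpa [h] using norm_add_le I δ
  rw [key]
  refine le_norm_div_of_mul_le (by positivity) hτ hτB ?_
  rw [norm_mul, Complex.norm_two]
  nlinarith [norm_nonneg δ]

lemma norm_one_sub_I : ‖1 - I‖ = ‖1 + I‖ := by
  rw [← norm_conj (1 + I)]; simp [sub_eq_add_neg]

lemma one_le_norm_one_add_I : 1 ≤ ‖1 + I‖ := by
  simpa using abs_re_le_norm (1 + I)

lemma norm_one_sub_two_div_add_one_sub_I_le (h : τ = I + δ) (hδ : ‖δ‖ ≤ 1 / 1000) :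
    ‖(1 - 2 / (τ + 1)) - I‖ ≤ 2 * ‖δ‖ := by
  have hτ1 : τ + 1 = (1 + I) + δ := by rw [h]; ring
  have hne : τ + 1 ≠ 0 :=
    ne_zero_of_eq_add_of_norm_lt hτ1 (by linarith [one_le_norm_one_add_I])
  have hlow : ‖1 + I‖ - ‖δ‖ ≤ ‖τ + 1‖ := hτ1 ▸ norm_sub_le_norm_add _ _
  have key : (1 - 2 / (τ + 1)) - I = (1 - I) * δ / (τ + 1) := by
    rw [h] at hne ⊢; field_simp; linear_combination -I_sq
  rw [key, norm_div, norm_mul, norm_one_sub_I]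
  refine div_le_of_le_mul₀ (norm_nonneg _) (by positivity) ?_
  nlinarith [one_le_norm_one_add_I, norm_nonneg δ]

lemma one_sub_sub_le_norm_sub_of_near {w z : ℂ} {r s : ℝ} (hw : ‖w - I‖ ≤ r)
    (hz : ‖z - 2 * I‖ ≤ s) : 1 - r - s ≤ ‖w - z‖ := by
  have htri := norm_add₃_le (a := I - w) (b := w - z) (c := z - 2 * I)
  rw [show I - w + (w - z) + (z - 2 * I) = -I by ring, norm_neg, norm_I, norm_sub_rev] at htri
  linarith

lemma norm_two_mul_sub_two_I (h : τ = I + δ) : ‖2 * τ - 2 * I‖ = 2 * ‖δ‖ := by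
  rw [h, show 2 * (I + δ) - 2 * I = 2 * δ by ring, norm_mul, Complex.norm_two]

lemma norm_neg_two_div_sub_two_I_le (h : τ = I + δ) (hδ : ‖δ‖ ≤ 1 / 1000) :
    ‖-2 / τ - 2 * I‖ ≤ 1 / 400 := by
  have hτ : τ ≠ 0 := ne_zero_of_eq_add_of_norm_lt h (by rw [norm_I]; linarith)
  have hlow : 1 - ‖δ‖ ≤ ‖τ‖ := by simpa [h] using norm_sub_le_norm_add I δ
  have key : -2 / τ - 2 * I = -2 * I * δ / τ := by
    rw [h] at hτ ⊢; field_simp; linear_combination -I_sq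
  rw [key, norm_div, norm_mul, norm_mul, norm_neg, Complex.norm_two, norm_I]
  refine div_le_of_le_mul₀ (norm_nonneg _) (by norm_num) ?_
  linarith

end NearI

section NearRho

variable {τ δ : ℂ}

lemma rho_sq_sub_rho_add_one : ρ ^ 2 - ρ + 1 = 0 := by
  have h3 : ((Real.sqrt 3 : ℝ) : ℂ) ^ 2 = 3 := by
    rw [← ofReal_pow, Real.sq_sqrt (by norm_num)]; norm_num
  linear_combination (-1 / 4 : ℂ) * h3 + ((Real.sqrt 3 : ℂ) ^ 2 / 4) * I_sq

lemma norm_two_mul_rho_sub_one : ‖2 * ρ - 1‖ = Real.sqrt 3 := by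
  rw [show 2 * ρ - 1 = (Real.sqrt 3 : ℂ) * I by ring, norm_mul, norm_I, mul_one, norm_real,
    Real.norm_of_nonneg (Real.sqrt_nonneg 3)]

lemma norm_rho : ‖ρ‖ = 1 := by
  rw [Complex.norm_def, Real.sqrt_eq_one, normSq_apply]
  field_simp; norm_num [div_pow]

lemma norm_rho_sub_one : ‖ρ - 1‖ = 1 := by
  rw [Complex.norm_def, Real.sqrt_eq_one, normSq_apply]
  field_simp; norm_num [div_pow]

lemma sq_sub_add_one_eq_of_eq_rho_add (h : τ = ρ + δ) :
    τ ^ 2 - τ + 1 = δ * (δ + (2 * ρ - 1)) := by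
  subst h; linear_combination rho_sq_sub_rho_add_one

lemma le_norm_two_mul_sq_sub_add_one_div (h : τ = ρ + δ) (hδ : ‖δ‖ ≤ 1 / 10000) {D : ℂ}
    (hD : D ≠ 0) (hDB : ‖D‖ ≤ (1 + ‖δ‖) ^ 2) : 3.46 * ‖δ‖ ≤ ‖2 * (τ ^ 2 - τ + 1) / D‖ := by
  have hq := norm_mul_sub_norm_le_norm_mul_add (2 * ρ - 1) δ
  rw [norm_two_mul_rho_sub_one, ← sq_sub_add_one_eq_of_eq_rho_add h] at hq
  have hs : 1.732 ≤ Real.sqrt 3 := (Real.le_sqrt (by norm_num) (by norm_num)).2 (by norm_num)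
  refine le_norm_div_of_mul_le (by positivity) hD hDB ?_
  have hfactor : 3.46 * (1 + ‖δ‖) ^ 2 ≤ 2 * (Real.sqrt 3 - ‖δ‖) := by nlinarith [norm_nonneg δ]
  rw [norm_mul, Complex.norm_two]
  nlinarith [mul_le_mul_of_nonneg_left hfactor (norm_nonneg δ)]

lemma separation_of_eq_rho_add (h : τ = ρ + δ) (hδ : ‖δ‖ ≤ 1 / 10000) :
    3.46 * ‖δ‖ ≤ ‖(2 * τ - 1) - (1 - 2 / τ)‖ ∧
      3.46 * ‖δ‖ ≤ ‖(2 * τ - 1) - (-1 - 2 / (τ - 1))‖ ∧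
      3.46 * ‖δ‖ ≤ ‖(1 - 2 / τ) - (-1 - 2 / (τ - 1))‖ := by
  have hτ1 : τ - 1 = (ρ - 1) + δ := by rw [h]; ring
  have hτ0 : τ ≠ 0 := ne_zero_of_eq_add_of_norm_lt h (by rw [norm_rho]; linarith)
  have hτ10 : τ - 1 ≠ 0 :=
    ne_zero_of_eq_add_of_norm_lt hτ1 (by rw [norm_rho_sub_one]; linarith)
  have hτB : ‖τ‖ ≤ 1 + ‖δ‖ := by
    rw [h]; exact (norm_add_le _ _).trans_eq (by rw [norm_rho])
  have hτ1B : ‖τ - 1‖ ≤ 1 + ‖δ‖ := by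
    rw [hτ1]; exact (norm_add_le _ _).trans_eq (by rw [norm_rho_sub_one])
  have hB : 1 + ‖δ‖ ≤ (1 + ‖δ‖) ^ 2 := by nlinarith [norm_nonneg δ]
  refine ⟨?_, ?_, ?_⟩
  · rw [show (2 * τ - 1) - (1 - 2 / τ) = 2 * (τ ^ 2 - τ + 1) / τ by field_simp; ring]
    exact le_norm_two_mul_sq_sub_add_one_div h hδ hτ0 (hτB.trans hB)
  · rw [show (2 * τ - 1) - (-1 - 2 / (τ - 1)) = 2 * (τ ^ 2 - τ + 1) / (τ - 1) by
      field_simp; ring]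
    exact le_norm_two_mul_sq_sub_add_one_div h hδ hτ10 (hτ1B.trans hB)
  · rw [show (1 - 2 / τ) - (-1 - 2 / (τ - 1)) = 2 * (τ ^ 2 - τ + 1) / (τ * (τ - 1)) by
      field_simp; ring]
    refine le_norm_two_mul_sq_sub_add_one_div h hδ (mul_ne_zero hτ0 hτ10) ?_
    rw [norm_mul, sq]
    exact mul_le_mul hτB hτ1B (norm_nonneg _) (by positivity)

end NearRho

theorem preimage_separation_general (τ : ℂ) :
    (∀ δ : ℂ, τ = Complex.I + δ → ‖δ‖ ≤ 2 ^ (-(30 : ℤ)) →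
      3.99 * ‖δ‖ ≤ ‖2 * τ - (-2 / τ)‖ ∧
      ‖(1 - 2 / (τ + 1)) - Complex.I‖ ≤ 2 * ‖δ‖ ∧
      (∀ w : ℂ, ‖w - Complex.I‖ ≤ 2 ^ (-(28 : ℤ)) →
        0.99 ≤ ‖w - 2 * τ‖ ∧ 0.99 ≤ ‖w - (-2 / τ)‖)) ∧
    (∀ δ : ℂ, τ = (1 + Complex.I * Real.sqrt 3) / 2 + δ → ‖δ‖ ≤ 2 ^ (-(30 : ℤ)) →
      3.46 * ‖δ‖ ≤ ‖(2 * τ - 1) - (1 - 2 / τ)‖ ∧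
      3.46 * ‖δ‖ ≤ ‖(2 * τ - 1) - (-1 - 2 / (τ - 1))‖ ∧
      3.46 * ‖δ‖ ≤ ‖(1 - 2 / τ) - (-1 - 2 / (τ - 1))‖) := by
  have h30 : (2 : ℝ) ^ (-(30 : ℤ)) ≤ 1 / 10000 := by norm_num
  have h28 : (2 : ℝ) ^ (-(28 : ℤ)) ≤ 1 / 1000 := by norm_num
  refine ⟨fun δ h hδ => ?_, fun δ h hδ => separation_of_eq_rho_add h (hδ.trans h30)⟩
  have hδ' : ‖δ‖ ≤ 1 / 1000 := hδ.trans (h30.trans (by norm_num))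
  refine ⟨le_norm_two_mul_sub_neg_two_div h hδ', norm_one_sub_two_div_add_one_sub_I_le h hδ',
    fun w hw => ⟨?_, ?_⟩⟩
  · have := one_sub_sub_le_norm_sub_of_near (hw.trans h28) (norm_two_mul_sub_two_I h).le
    linarith
  · have := one_sub_sub_le_norm_sub_of_near (hw.trans h28) (norm_neg_two_div_sub_two_I_le h hδ')
    linarith

theorem preimage_separation (τ : ℂ) (hτ : τ ∈ Fdom) :
    (∀ δ : ℂ, τ = Complex.I + δ → ‖δ‖ ≤ 2 ^ (-(30 : ℤ)) →
      3.99 * ‖δ‖ ≤ ‖2 * τ - (-2 / τ)‖ ∧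
      ‖(1 - 2 / (τ + 1)) - Complex.I‖ ≤ 2 * ‖δ‖ ∧
      (∀ w : ℂ, ‖w - Complex.I‖ ≤ 2 ^ (-(28 : ℤ)) →
        0.99 ≤ ‖w - 2 * τ‖ ∧ 0.99 ≤ ‖w - (-2 / τ)‖)) ∧
    (∀ δ : ℂ, τ = (1 + Complex.I * Real.sqrt 3) / 2 + δ → ‖δ‖ ≤ 2 ^ (-(30 : ℤ)) →
      3.46 * ‖δ‖ ≤ ‖(2 * τ - 1) - (1 - 2 / τ)‖ ∧
      3.46 * ‖δ‖ ≤ ‖(2 * τ - 1) - (-1 - 2 / (τ - 1))‖ ∧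
      3.46 * ‖δ‖ ≤ ‖(1 - 2 / τ) - (-1 - 2 / (τ - 1))‖) :=
  preimage_separation_general τ
end
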